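/- Let s > 0, p ≥ 1, and let f : ℝ^n → ℝ be measurable with f ∈ L^{q₀}(μ_s) for some q₀ > p. Let φ : ℝ^n → ℝ be continuous with compact support. Then there exists q > p such that the convolution φ ∗ f, (φ ∗ f)(x) = ∫ φ(y) f(x − y) dy, belongs to L^q(μ_s). -/

import Mathlib

open MeasureTheory Real
open scoped ENNReal NNReal

/-- The Gaussian heat kernel `ρ_s(x) = (πs)^(−n/2) exp(−‖x‖²/s)` of `e^{sΔ/4}` on `ℝ^n`. -/
noncomputable def heatK (n : ℕ) (s : ℝ) (x : EuclideanSpace ℝ (Fin n)) : ℝ :=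
  (Real.pi * s) ^ (-(n : ℝ) / 2) * Real.exp (-‖x‖ ^ 2 / s)

/-- The heat kernel probability measure `μ_s = ρ_s dx` on `ℝ^n`. -/
noncomputable def gm (n : ℕ) (s : ℝ) : Measure (EuclideanSpace ℝ (Fin n)) :=
  volume.withDensity fun x => ENNReal.ofReal (heatK n s x)

/-- The convolution `(φ ∗ f)(x) = ∫ φ(y) f(x − y) dy` (with respect to Lebesgue measure). -/
noncomputable def conv {n : ℕ} (φ f : EuclideanSpace ℝ (Fin n) → ℝ)
    (x : EuclideanSpace ℝ (Fin n)) : ℝ :=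
  ∫ y, φ y * f (x - y)

lemma aux_rexp_integrable {n : ℕ} {b : ℝ} (hb : 0 < b) :
    Integrable (fun z : EuclideanSpace ℝ (Fin n) => rexp (-b * ‖z‖ ^ 2)) := by
  have := GaussianFourier.integrable_cexp_neg_mul_sq_norm_add
    (V := EuclideanSpace ℝ (Fin n)) (b := (b : ℂ)) (by simpa using hb) 0 0
  have h := this.norm
  refine h.congr ?_
  filter_upwards with z
  rw [Complex.norm_exp]
  simp [← Complex.ofReal_pow]

lemma aux_gauss_lintegral {n : ℕ} {b c : ℝ} (hb : 0 < b) :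
    ∫⁻ z : EuclideanSpace ℝ (Fin n), ENNReal.ofReal (rexp (c * ‖z‖ - b * ‖z‖ ^ 2)) < ⊤ := by
  have hint : Integrable (fun z : EuclideanSpace ℝ (Fin n) =>
      rexp (c * ‖z‖ - b * ‖z‖ ^ 2)) := by
    have hmeas : Continuous (fun z : EuclideanSpace ℝ (Fin n) =>
        rexp (c * ‖z‖ - b * ‖z‖ ^ 2)) := by continuity
    have hInt2 : Integrable (fun z : EuclideanSpace ℝ (Fin n) =>
        rexp (c ^ 2 / (2 * b)) * rexp (-(b/2) * ‖z‖ ^ 2)) :=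
      (aux_rexp_integrable (by positivity)).const_mul _
    refine hInt2.mono' hmeas.aestronglyMeasurable ?_
    filter_upwards with z
    rw [Real.norm_eq_abs, abs_of_pos (exp_pos _), ← Real.exp_add]
    apply exp_le_exp.2
    have h1 : c * ‖z‖ ≤ c ^ 2 / (2 * b) + (b / 2) * ‖z‖ ^ 2 := by
      rw [← sub_nonneg]
      have heq : c ^ 2 / (2 * b) + (b / 2) * ‖z‖ ^ 2 - c * ‖z‖
          = (b * ‖z‖ - c) ^ 2 / (2 * b) := by field_simp; ring
      rw [heq]; positivity
    nlinarith [norm_nonneg z]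
  exact hint.lintegral_lt_top

lemma aux_holder {n : ℕ} {s R q q₀ : ℝ} (hs : 0 < s) (hR : 0 ≤ R) (hq1 : 1 ≤ q)
    (hqq₀ : q < q₀) (f : EuclideanSpace ℝ (Fin n) → ℝ) (hfmeas : Measurable f)
    (hA : ∫⁻ z, ENNReal.ofReal (rexp (-‖z‖ ^ 2 / s)) * (‖f z‖₊ : ℝ≥0∞) ^ q₀ < ⊤) :
    ∫⁻ z, ENNReal.ofReal (rexp ((2 * R * ‖z‖ - ‖z‖ ^ 2) / s)) * (‖f z‖₊ : ℝ≥0∞) ^ q < ⊤ := by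
  have hq0 : 0 < q := by linarith
  have hq₀0 : 0 < q₀ := by linarith
  have hd : 0 < q₀ - q := by linarith
  set r : ℝ := q₀ / (q₀ - q) with hr
  have hconj : (q₀ / q).HolderConjugate r := by
    rw [Real.holderConjugate_iff]
    constructor
    · rw [lt_div_iff₀ hq0]; linarith
    · rw [hr]; field_simp; ring
  have hr1 : r * (1 - q / q₀) = 1 := by rw [hr]; field_simp
  have hrpos : 0 < r := by positivity
  set nf : EuclideanSpace ℝ (Fin n) → ℝ≥0∞ := fun z => (‖f z‖₊ : ℝ≥0∞) with hnf
  have hnfmeas : Measurable nf := hfmeas.nnnorm.coe_nnreal_ennreal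
  set F1 : EuclideanSpace ℝ (Fin n) → ℝ≥0∞ :=
    fun z => (ENNReal.ofReal (rexp (-‖z‖ ^ 2 / s)) * nf z ^ q₀) ^ (q / q₀) with hF1
  set F2 : EuclideanSpace ℝ (Fin n) → ℝ≥0∞ :=
    fun z => ENNReal.ofReal (rexp ((2 * R * ‖z‖ - (1 - q / q₀) * ‖z‖ ^ 2) / s)) with hF2
  have hgmeas : Measurable (fun z : EuclideanSpace ℝ (Fin n) => ‖z‖) :=
    continuous_norm.measurable
  have hF1meas : Measurable F1 := by
    refine Measurable.pow_const ?_ _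
    exact (ENNReal.measurable_ofReal.comp
      ((continuous_exp.measurable).comp ((hgmeas.pow_const 2).neg.div_const s))).mul
      (hnfmeas.pow_const _)
  have hF2meas : Measurable F2 := by
    refine ENNReal.measurable_ofReal.comp (continuous_exp.measurable.comp ?_)
    exact ((measurable_const.mul hgmeas).sub (measurable_const.mul (hgmeas.pow_const 2))).div_const s
  -- pointwise identity
  have hpt : ∀ z, ENNReal.ofReal (rexp ((2 * R * ‖z‖ - ‖z‖ ^ 2) / s)) * nf z ^ q
      = F1 z * F2 z := by
    intro z
    have hexpeq : -‖z‖ ^ 2 / s * (q / q₀) + (2 * R * ‖z‖ - (1 - q / q₀) * ‖z‖ ^ 2) / s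
        = (2 * R * ‖z‖ - ‖z‖ ^ 2) / s := by field_simp; ring
    have hqq : q₀ * (q / q₀) = q := by field_simp
    have : F1 z * F2 z
        = ENNReal.ofReal (rexp ((2 * R * ‖z‖ - ‖z‖ ^ 2) / s)) * nf z ^ q := by
      simp only [hF1, hF2]
      rw [ENNReal.mul_rpow_of_nonneg _ _ (by positivity : (0:ℝ) ≤ q / q₀),
        ENNReal.ofReal_rpow_of_pos (exp_pos _), ← Real.exp_mul,
        ← ENNReal.rpow_mul, hqq, mul_right_comm, ← ENNReal.ofReal_mul (exp_pos _).le,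
        ← Real.exp_add, hexpeq]
    rw [this]
  calc ∫⁻ z, ENNReal.ofReal (rexp ((2 * R * ‖z‖ - ‖z‖ ^ 2) / s)) * nf z ^ q
      = ∫⁻ z, F1 z * F2 z := by simp_rw [hpt]
    _ ≤ (∫⁻ z, F1 z ^ (q₀ / q)) ^ (1 / (q₀ / q)) * (∫⁻ z, F2 z ^ r) ^ (1 / r) :=
        ENNReal.lintegral_mul_le_Lp_mul_Lq volume hconj hF1meas.aemeasurable hF2meas.aemeasurable
    _ < ⊤ := by
        apply ENNReal.mul_lt_top
        · refine ENNReal.rpow_lt_top_of_nonneg (by positivity) ?_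
          have : ∀ z, F1 z ^ (q₀ / q)
              = ENNReal.ofReal (rexp (-‖z‖ ^ 2 / s)) * nf z ^ q₀ := by
            intro z
            simp only [hF1]
            rw [← ENNReal.rpow_mul]
            have : q / q₀ * (q₀ / q) = 1 := by field_simp
            rw [this, ENNReal.rpow_one]
          simp_rw [this]
          exact hA.ne
        · refine ENNReal.rpow_lt_top_of_nonneg (by positivity) ?_
          have : ∀ z, F2 z ^ r
              = ENNReal.ofReal (rexp ((2 * R * r / s) * ‖z‖ - (1/s) * ‖z‖ ^ 2)) := by
            intro z
            have h1q : 1 - q / q₀ = 1 / r := eq_one_div_of_mul_eq_one_left (by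
              rw [mul_comm] at hr1; exact hr1)
            simp only [hF2]
            rw [ENNReal.ofReal_rpow_of_pos (exp_pos _), ← Real.exp_mul]
            congr 1
            rw [h1q]
            field_simp
          simp_rw [this]
          exact (aux_gauss_lintegral (by positivity)).ne

/-- Let `s > 0`, `p ≥ 1`, `f ∈ L^{q₀}(μ_s)` measurable for some `q₀ > p`, and let `φ` be
continuous with compact support.  Then `φ ∗ f ∈ L^q(μ_s)` for some `q > p`. -/
theorem stmt_7 {n : ℕ} (hn : 1 ≤ n) (s p q₀ : ℝ) (hs : 0 < s) (hp : 1 ≤ p) (hq₀ : p < q₀)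
    (f φ : EuclideanSpace ℝ (Fin n) → ℝ) (hfmeas : Measurable f)
    (hf : MemLp f (ENNReal.ofReal q₀) (gm n s))
    (hφcont : Continuous φ) (hφsupp : HasCompactSupport φ) :
    ∃ q : ℝ, p < q ∧ MemLp (conv φ f) (ENNReal.ofReal q) (gm n s) := by
  classical
  set q : ℝ := (p + q₀) / 2 with hqdef
  have hpq : p < q := by rw [hqdef]; linarith
  have hq1 : 1 < q := lt_of_le_of_lt hp hpq
  have hq0 : 0 < q := by linarith
  have hqq₀ : q < q₀ := by rw [hqdef]; linarith
  have hq₀0 : 0 < q₀ := by linarith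
  refine ⟨q, hpq, ?_⟩
  -- basic objects
  set c0 : ℝ := (Real.pi * s) ^ (-(n : ℝ) / 2) with hc0def
  have hc0 : 0 < c0 := Real.rpow_pos_of_pos (by positivity) _
  set ρ : EuclideanSpace ℝ (Fin n) → ℝ≥0∞ := fun x => ENNReal.ofReal (heatK n s x) with hρdef
  have hρeq : ∀ x, ρ x = ENNReal.ofReal c0 * ENNReal.ofReal (rexp (-‖x‖ ^ 2 / s)) := by
    intro x
    rw [hρdef, ← ENNReal.ofReal_mul hc0.le]
    rfl
  have hρmeas : Measurable ρ := by
    refine ENNReal.measurable_ofReal.comp ?_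
    have : Continuous (heatK n s) := by
      unfold heatK; fun_prop
    exact this.measurable
  have hρtop : ∀ x, ρ x ≠ ⊤ := fun x => ENNReal.ofReal_ne_top
  have hgm : gm n s = volume.withDensity ρ := rfl
  set nf : EuclideanSpace ℝ (Fin n) → ℝ≥0∞ := fun z => (‖f z‖₊ : ℝ≥0∞) with hnfdef
  have hnfmeas : Measurable nf := hfmeas.nnnorm.coe_nnreal_ennreal
  -- support and bound of φ
  obtain ⟨R, hRpos, hRsub⟩ : ∃ R : ℝ, 0 < R ∧ tsupport φ ⊆ Metric.closedBall 0 R :=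
    hφsupp.isBounded.subset_closedBall_lt 0 0
  obtain ⟨C, hC⟩ : ∃ C, ∀ x, ‖φ x‖ ≤ C := hφsupp.exists_bound_of_continuous hφcont
  set MC : ℝ≥0∞ := ENNReal.ofReal C with hMCdef
  have hMCtop : MC ≠ ⊤ := ENNReal.ofReal_ne_top
  set B : Set (EuclideanSpace ℝ (Fin n)) := Metric.closedBall 0 R with hBdef
  have hBmeas : MeasurableSet B := measurableSet_closedBall
  set vB : ℝ≥0∞ := volume B with hvBdef
  have hvBtop : vB ≠ ⊤ := measure_closedBall_lt_top.ne
  -- measurability of the convolution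
  have hconvsm : StronglyMeasurable (conv φ f) := by
    have hFmeas : StronglyMeasurable
        (fun z : (EuclideanSpace ℝ (Fin n)) × (EuclideanSpace ℝ (Fin n)) =>
          φ z.2 * f (z.1 - z.2)) :=
      ((hφcont.measurable.comp measurable_snd).mul
        (hfmeas.comp (measurable_fst.sub measurable_snd))).stronglyMeasurable
    exact hFmeas.integral_prod_right'
  have hconvmeas : Measurable (conv φ f) := hconvsm.measurable
  -- from hf : the weighted q₀ integral of f is finite
  have hA : ∫⁻ z, ENNReal.ofReal (rexp (-‖z‖ ^ 2 / s)) * nf z ^ q₀ < ⊤ := by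
    have hfin := hf.2
    rw [eLpNorm_eq_lintegral_rpow_enorm_toReal (by simp [hq₀0] : ENNReal.ofReal q₀ ≠ 0)
      (by simp : ENNReal.ofReal q₀ ≠ ⊤), ENNReal.toReal_ofReal hq₀0.le] at hfin
    rw [ENNReal.rpow_lt_top_iff_of_pos (by positivity)] at hfin
    change ∫⁻ x, nf x ^ q₀ ∂(gm n s) < ⊤ at hfin
    rw [hgm, lintegral_withDensity_eq_lintegral_mul volume hρmeas
      (hnfmeas.pow_const q₀)] at hfin
    have : ∀ z, (ρ * fun z => nf z ^ q₀) z
        = ENNReal.ofReal c0 * (ENNReal.ofReal (rexp (-‖z‖ ^ 2 / s)) * nf z ^ q₀) := by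
      intro z
      simp only [Pi.mul_apply, hρeq z, mul_assoc]
    simp_rw [this] at hfin
    rw [lintegral_const_mul' _ _ ENNReal.ofReal_ne_top] at hfin
    exact ENNReal.lt_top_of_mul_ne_top_right hfin.ne (by simp [hc0])
  -- the key weighted integral
  have hI : ∫⁻ z, ENNReal.ofReal (rexp ((2 * R * ‖z‖ - ‖z‖ ^ 2) / s)) * nf z ^ q < ⊤ :=
    aux_holder hs hRpos.le hq1.le hqq₀ f hfmeas hA
  set I : ℝ≥0∞ := ∫⁻ z, ENNReal.ofReal (rexp ((2 * R * ‖z‖ - ‖z‖ ^ 2) / s)) * nf z ^ q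
    with hIdef
  -- pointwise bound on the convolution
  set C1 : ℝ≥0∞ := MC ^ q * vB ^ (q - 1) with hC1def
  have hC1top : C1 ≠ ⊤ := by
    apply ENNReal.mul_ne_top
    · exact ENNReal.rpow_ne_top_of_nonneg hq0.le hMCtop
    · exact ENNReal.rpow_ne_top_of_nonneg (by linarith) hvBtop
  have hpoint : ∀ x, (‖conv φ f x‖₊ : ℝ≥0∞) ^ q ≤ C1 * ∫⁻ y in B, nf (x - y) ^ q := by
    intro x
    have h1 : (‖conv φ f x‖₊ : ℝ≥0∞) ≤ ∫⁻ y, (‖φ y * f (x - y)‖₊ : ℝ≥0∞) :=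
      enorm_integral_le_lintegral_enorm _
    have h2 : ∀ y, (‖φ y * f (x - y)‖₊ : ℝ≥0∞)
        ≤ B.indicator (fun y => MC * nf (x - y)) y := by
      intro y
      by_cases hy : y ∈ B
      · rw [Set.indicator_of_mem hy, nnnorm_mul, ENNReal.coe_mul]
        refine mul_le_mul_left ?_ _
        rw [← ENNReal.ofReal_coe_nnreal, coe_nnnorm]
        exact ENNReal.ofReal_le_ofReal (hC y)
      · rw [Set.indicator_of_notMem hy,
          image_eq_zero_of_notMem_tsupport (fun h => hy (hRsub h))]
        simp
    have h3 : (‖conv φ f x‖₊ : ℝ≥0∞) ≤ MC * ∫⁻ y in B, nf (x - y) := by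
      refine h1.trans ?_
      calc ∫⁻ y, (‖φ y * f (x - y)‖₊ : ℝ≥0∞)
          ≤ ∫⁻ y, B.indicator (fun y => MC * nf (x - y)) y := lintegral_mono h2
        _ = ∫⁻ y in B, MC * nf (x - y) := lintegral_indicator hBmeas _
        _ = MC * ∫⁻ y in B, nf (x - y) := lintegral_const_mul' _ _ hMCtop
    -- Hölder on B
    have h4 : ∫⁻ y in B, nf (x - y)
        ≤ (∫⁻ y in B, nf (x - y) ^ q) ^ (1/q) * vB ^ (1 - 1/q) := by
      have hconj : q.HolderConjugate (q / (q - 1)) := Real.HolderConjugate.conjExponent hq1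
      have hA1 : AEMeasurable (fun y => nf (x - y)) (volume.restrict B) :=
        (hnfmeas.comp (measurable_id.const_sub x)).aemeasurable
      have hH := ENNReal.lintegral_mul_le_Lp_mul_Lq (volume.restrict B) hconj hA1
        (aemeasurable_const (b := (1 : ℝ≥0∞)))
      simp only [Pi.mul_apply, mul_one, ENNReal.one_rpow, lintegral_const,
        Measure.restrict_apply_univ] at hH
      have hexp : 1 / (q / (q - 1)) = 1 - 1 / q := by
        rw [one_div_div]
        field_simp
      rw [hexp, one_mul] at hH
      exact hH
    -- raise to the power q
    calc (‖conv φ f x‖₊ : ℝ≥0∞) ^ q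
        ≤ (MC * ((∫⁻ y in B, nf (x - y) ^ q) ^ (1/q) * vB ^ (1 - 1/q))) ^ q := by
          exact ENNReal.rpow_le_rpow (h3.trans (mul_le_mul_right h4 _)) hq0.le
      _ = C1 * ∫⁻ y in B, nf (x - y) ^ q := by
          rw [ENNReal.mul_rpow_of_nonneg _ _ hq0.le,
            ENNReal.mul_rpow_of_nonneg _ _ hq0.le, ← ENNReal.rpow_mul,
            ← ENNReal.rpow_mul, one_div_mul_cancel hq0.ne', ENNReal.rpow_one]
          have : (1 - 1/q) * q = q - 1 := by field_simp
          rw [this, hC1def]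
          ring
  -- translation identity
  have htrans : ∀ y : EuclideanSpace ℝ (Fin n),
      ∫⁻ x, ρ x * nf (x - y) ^ q = ∫⁻ z, ρ (z + y) * nf z ^ q := by
    intro y
    have hmp := measurePreserving_add_right (volume : Measure (EuclideanSpace ℝ (Fin n))) y
    have hgm2 : Measurable fun x : EuclideanSpace ℝ (Fin n) => ρ x * nf (x - y) ^ q :=
      hρmeas.mul ((hnfmeas.comp (measurable_id.sub_const y)).pow_const q)
    rw [← hmp.lintegral_comp hgm2]
    refine lintegral_congr fun z => ?_
    simp [add_sub_cancel_right]
  -- Gaussian translation bound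
  have hbound : ∀ y ∈ B, ∫⁻ z, ρ (z + y) * nf z ^ q ≤ ENNReal.ofReal c0 * I := by
    intro y hy
    have hyR : ‖y‖ ≤ R := by
      rwa [hBdef, Metric.mem_closedBall, dist_zero_right] at hy
    rw [hIdef, ← lintegral_const_mul' _ _ (ENNReal.ofReal_ne_top (r := c0))]
    refine lintegral_mono fun z => ?_
    rw [hρeq (z + y), mul_assoc]
    refine mul_le_mul_right (mul_le_mul_left ?_ _) _
    refine ENNReal.ofReal_le_ofReal (exp_le_exp.2 ?_)
    rw [div_le_div_iff_of_pos_right hs]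
    have h1 : ‖z‖ ≤ ‖z + y‖ + ‖y‖ := by
      calc ‖z‖ = ‖z + y - y‖ := by rw [add_sub_cancel_right]
        _ ≤ ‖z + y‖ + ‖y‖ := norm_sub_le _ _
    rcases le_or_gt ‖z‖ R with hbR | hbR
    · nlinarith [norm_nonneg (z + y), norm_nonneg z]
    · have hab : ‖z‖ - R ≤ ‖z + y‖ := by linarith
      nlinarith [mul_self_le_mul_self (by linarith : (0:ℝ) ≤ ‖z‖ - R) hab]
  -- conclusion
  have hmain : ∫⁻ x, (‖conv φ f x‖₊ : ℝ≥0∞) ^ q ∂(gm n s)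
      ≤ C1 * ((ENNReal.ofReal c0 * I) * vB) := by
    calc ∫⁻ x, (‖conv φ f x‖₊ : ℝ≥0∞) ^ q ∂(gm n s)
        = ∫⁻ x, ρ x * (‖conv φ f x‖₊ : ℝ≥0∞) ^ q := by
          rw [hgm, lintegral_withDensity_eq_lintegral_mul volume hρmeas
            (hconvmeas.nnnorm.coe_nnreal_ennreal.pow_const q)]
          rfl
      _ ≤ ∫⁻ x, ρ x * (C1 * ∫⁻ y in B, nf (x - y) ^ q) :=
          lintegral_mono fun x => mul_le_mul_right (hpoint x) _
      _ = C1 * ∫⁻ x, ρ x * ∫⁻ y in B, nf (x - y) ^ q := by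
          rw [← lintegral_const_mul' _ _ hC1top]
          congr 1
          ext x
          ring
      _ = C1 * ∫⁻ x, ∫⁻ y in B, ρ x * nf (x - y) ^ q := by
          congr 1
          refine lintegral_congr fun x => ?_
          exact (lintegral_const_mul' _ _ (hρtop x)).symm
      _ = C1 * ∫⁻ y in B, ∫⁻ x, ρ x * nf (x - y) ^ q := by
          congr 1
          refine lintegral_lintegral_swap ?_
          exact ((hρmeas.comp measurable_fst).mul
            ((hnfmeas.comp (measurable_fst.sub measurable_snd)).pow_const q)).aemeasurable
      _ ≤ C1 * ∫⁻ _ in B, ENNReal.ofReal c0 * I := by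
          refine mul_le_mul_right ?_ _
          refine setLIntegral_mono' hBmeas fun y hy => ?_
          rw [htrans y]
          exact hbound y hy
      _ = C1 * ((ENNReal.ofReal c0 * I) * vB) := by
          rw [setLIntegral_const]
  refine ⟨hconvsm.aestronglyMeasurable, ?_⟩
  rw [eLpNorm_eq_lintegral_rpow_enorm_toReal (by simp [hq0] : ENNReal.ofReal q ≠ 0)
    (by simp : ENNReal.ofReal q ≠ ⊤), ENNReal.toReal_ofReal hq0.le]
  refine ENNReal.rpow_lt_top_of_nonneg (by positivity) ?_
  refine (lt_of_le_of_lt hmain ?_).ne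
  refine ENNReal.mul_lt_top hC1top.lt_top ?_
  exact ENNReal.mul_lt_top (ENNReal.mul_lt_top ENNReal.ofReal_lt_top hI) hvBtop.lt_top
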